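/- (Optimal truncation index asymptotics.) Let p ≥ 2 be an integer, 0 ≤ ν < 1, κ = 2(p−1), and 𝒜 = p − 3/2 − (κ+1)ν. Define the ratio of consecutive terms r(N) = [(2p(N+1) − 2pν)! / (2pN − 2pν)!] · 1/((N+1)(N+1−ν)) (with factorials interpreted via the Gamma function). Then as N → ∞, r(N) = (2pN)^{2p} N^{−2} (1 + 𝒜/N + O(N^{−2})). -/

import Mathlib

open Real Filter Asymptotics Finset Topology

/-! With `y = 2pN - 2pν + 1`, the Gamma ratio is the product `∏_{j < 2p} (y + j)`, i.e.
`(2pN)^{2p} ∏_j (1 + c_j/N)` with `c_j = (j + 1 - 2pν)/(2p)`, while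
`(N + 1)(N + 1 - ν) = N² (1 + 1/N)(1 + (1 - ν)/N)`. Both are `1 + (first-order term)/N + O(N⁻²)`
and their quotient has first-order coefficient `∑ c_j - (2 - ν) = 𝒜`. -/

theorem Real.Gamma_add_nat_eq_prod_mul (n : ℕ) {y : ℝ} (hy : 0 < y) :
    Gamma (y + n) = (∏ j ∈ range n, (y + j)) * Gamma y := by
  induction n with
  | zero => simp
  | succ n ih =>
    rw [Nat.cast_succ, ← add_assoc, Gamma_add_one (by positivity), ih, prod_range_succ]
    ring

theorem sum_range_natCast_add_one_mul_two (m : ℕ) :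
    (∑ j ∈ range m, ((j : ℝ) + 1)) * 2 = m * (m + 1) := by
  induction m with
  | zero => simp
  | succ m ih => rw [sum_range_succ, add_mul, ih]; push_cast; ring

namespace Asymptotics

variable {α 𝕜 : Type*} [NormedField 𝕜] {l : Filter α} {x : α → 𝕜}

theorem isBigO_prod_one_add_mul_sub {ι : Type*} [DecidableEq ι] (hx : Tendsto x l (𝓝 0))
    (s : Finset ι) (c : ι → 𝕜) :
    (fun i => ∏ j ∈ s, (1 + c j * x i) - (1 + (∑ j ∈ s, c j) * x i)) =O[l] fun i => x i ^ 2 := by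
  induction s using Finset.induction with
  | empty => simpa using isBigO_zero _ _
  | insert a s ha ih =>
    have hfactor : (fun i => 1 + c a * x i) =O[l] fun _ => (1 : 𝕜) := by
      refine Tendsto.isBigO_one 𝕜 (c := 1) ?_
      simpa using (hx.const_mul (c a)).const_add 1
    have hrest : (fun i => c a * (∑ j ∈ s, c j) * x i ^ 2) =O[l] fun i => x i ^ 2 :=
      (isBigO_refl _ _).const_mul_left _
    refine ((by simpa using hfactor.mul ih : _ =O[l] _).add hrest).congr (fun i => ?_) (fun _ => rfl)
    rw [prod_insert ha, sum_insert ha]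
    ring

theorem isBigO_div_sub_one_add_mul {P Q : α → 𝕜} {σ τ : 𝕜} (hx : Tendsto x l (𝓝 0))
    (hP : (fun i => P i - (1 + σ * x i)) =O[l] fun i => x i ^ 2)
    (hQ : (fun i => Q i - (1 + τ * x i)) =O[l] fun i => x i ^ 2) :
    (fun i => P i / Q i - (1 + (σ - τ) * x i)) =O[l] fun i => x i ^ 2 := by
  have hx2 : Tendsto (fun i => x i ^ 2) l (𝓝 0) := by simpa using hx.pow 2
  have hQ1 : Tendsto Q l (𝓝 1) := by
    have := (hQ.trans_tendsto hx2).add ((hx.const_mul τ).const_add 1)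
    simpa using this
  have hlin : (fun i => 1 + (σ - τ) * x i) =O[l] fun _ => (1 : 𝕜) := by
    refine Tendsto.isBigO_one 𝕜 (c := 1) ?_
    simpa using (hx.const_mul (σ - τ)).const_add 1
  have hnum : (fun i => P i - (1 + (σ - τ) * x i) * Q i) =O[l] fun i => x i ^ 2 := by
    have hsq : (fun i => (σ - τ) * τ * x i ^ 2) =O[l] fun i => x i ^ 2 :=
      (isBigO_refl _ _).const_mul_left _
    refine ((hP.sub (by simpa using hlin.mul hQ)).sub hsq).congr (fun i => ?_) (fun _ => rfl)
    ring
  have hQinv : (fun i => (Q i)⁻¹) =O[l] fun _ => (1 : 𝕜) :=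
    (hQ1.inv₀ one_ne_zero).isBigO_one 𝕜
  refine (by simpa using hnum.mul hQinv : _ =O[l] _).congr' ?_ EventuallyEq.rfl
  filter_upwards [hQ1.eventually_ne one_ne_zero] with i hi
  field_simp

end Asymptotics

theorem sum_range_two_mul_natCast_add_one_sub_div (p : ℕ) (hp : 0 < p) (ν : ℝ) :
    ∑ j ∈ range (2 * p), ((j : ℝ) + 1 - 2 * p * ν) / (2 * p) = p + 1 / 2 - 2 * p * ν := by
  have hGauss := sum_range_natCast_add_one_mul_two (2 * p)
  have hp' : (0 : ℝ) < p := by exact_mod_cast hp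
  simp only [← sum_div, sum_sub_distrib, sum_const, card_range, nsmul_eq_mul] at hGauss ⊢
  push_cast at hGauss ⊢
  field_simp
  linarith

theorem eventually_Gamma_ratio_eq_pow_mul_prod_div (p : ℕ) (hp : 0 < p) (ν : ℝ) :
    ∀ᶠ N : ℕ in atTop,
      Gamma (2 * p * ((N : ℝ) + 1) - 2 * p * ν + 1) / Gamma (2 * p * (N : ℝ) - 2 * p * ν + 1) *
          (1 / (((N : ℝ) + 1) * ((N : ℝ) + 1 - ν))) =
        (2 * (p : ℝ) * N) ^ (2 * p) * ((N : ℝ))⁻¹ ^ 2 *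
          ((∏ j ∈ range (2 * p), (1 + ((j : ℝ) + 1 - 2 * p * ν) / (2 * p) * (N : ℝ)⁻¹)) /
            ((1 + 1 * (N : ℝ)⁻¹) * (1 + (1 - ν) * (N : ℝ)⁻¹))) := by
  have hp' : (0 : ℝ) < p := by exact_mod_cast hp
  filter_upwards [tendsto_natCast_atTop_atTop.eventually_gt_atTop (max ν 0)] with N hNmax
  have hNν : ν < N := (le_max_left _ _).trans_lt hNmax
  have hN : (0 : ℝ) < N := (le_max_right _ _).trans_lt hNmax
  set y : ℝ := 2 * p * N - 2 * p * ν + 1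
  have hy : 0 < y := by nlinarith
  have hΓ : Gamma (2 * p * ((N : ℝ) + 1) - 2 * p * ν + 1) / Gamma y =
      ∏ j ∈ range (2 * p), (y + j) := by
    have harg : 2 * p * ((N : ℝ) + 1) - 2 * p * ν + 1 = y + ((2 * p : ℕ) : ℝ) := by
      push_cast; ring
    rw [harg, Gamma_add_nat_eq_prod_mul _ hy, mul_div_cancel_right₀ _ (Gamma_pos_of_pos hy).ne']
  have hfactor : ∀ j ∈ range (2 * p), y + j =
      2 * p * N * (1 + ((j : ℝ) + 1 - 2 * p * ν) / (2 * p) * (N : ℝ)⁻¹) := by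
    intro j _
    field_simp
    ring
  have hden : 1 / (((N : ℝ) + 1) * ((N : ℝ) + 1 - ν)) =
      (N : ℝ)⁻¹ ^ 2 / ((1 + 1 * (N : ℝ)⁻¹) * (1 + (1 - ν) * (N : ℝ)⁻¹)) := by
    have hQ : (1 + 1 * (N : ℝ)⁻¹) * (1 + (1 - ν) * (N : ℝ)⁻¹) =
        ((N : ℝ) + 1) * ((N : ℝ) + 1 - ν) * (N : ℝ)⁻¹ ^ 2 := by
      field_simp
      ring
    rw [hQ, div_mul_cancel_right₀ (by positivity), one_div]
  rw [hΓ, prod_congr rfl hfactor, prod_mul_distrib, prod_const, card_range, hden]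
  ring

theorem optimal_truncation_ratio_asymptotics_general (p : ℕ) (hp : 2 ≤ p) (ν : ℝ)
    (𝒜 : ℝ) (h𝒜 : 𝒜 = (p : ℝ) - 3/2 - (2 * ((p : ℝ) - 1) + 1) * ν)
    (r : ℕ → ℝ)
    (hr : ∀ N : ℕ, r N =
      Real.Gamma (2 * p * ((N : ℝ) + 1) - 2 * p * ν + 1) /
        Real.Gamma (2 * p * (N : ℝ) - 2 * p * ν + 1) *
        (1 / (((N : ℝ) + 1) * ((N : ℝ) + 1 - ν)))) :
    (fun N : ℕ => r N - (2 * (p : ℝ) * (N : ℝ)) ^ (2 * p) * ((N : ℝ))⁻¹ ^ 2 * (1 + 𝒜 / (N : ℝ)))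
      =O[atTop] (fun N : ℕ => (2 * (p : ℝ) * (N : ℝ)) ^ (2 * p) * ((N : ℝ))⁻¹ ^ 2 * ((N : ℝ))⁻¹ ^ 2) := by
  have hinv : Tendsto (fun N : ℕ => (N : ℝ)⁻¹) atTop (𝓝 0) :=
    tendsto_inv_atTop_zero.comp tendsto_natCast_atTop_atTop
  have hP := isBigO_prod_one_add_mul_sub hinv (range (2 * p))
    fun j => ((j : ℝ) + 1 - 2 * p * ν) / (2 * p)
  rw [sum_range_two_mul_natCast_add_one_sub_div p (by omega)] at hP
  have hQ : (fun N : ℕ => (1 + 1 * (N : ℝ)⁻¹) * (1 + (1 - ν) * (N : ℝ)⁻¹) -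
      (1 + (2 - ν) * (N : ℝ)⁻¹)) =O[atTop] fun N : ℕ => (N : ℝ)⁻¹ ^ 2 :=
    ((isBigO_refl _ _).const_mul_left (1 - ν)).congr (fun _ => by ring) (fun _ => rfl)
  have hexp := isBigO_div_sub_one_add_mul hinv hP hQ
  have hστ : (p + 1 / 2 - 2 * p * ν) - (2 - ν) = 𝒜 := by rw [h𝒜]; ring
  rw [hστ] at hexp
  refine ((isBigO_refl _ _).mul hexp).congr' ?_ EventuallyEq.rfl
  filter_upwards [eventually_Gamma_ratio_eq_pow_mul_prod_div p (by omega) ν] with N hN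
  rw [hr, hN, div_eq_mul_inv 𝒜]
  ring

/-- Optimal truncation index asymptotics: with `κ = 2(p-1)`, `𝒜 = p - 3/2 - (κ+1)ν` and
`r(N) = Γ(2p(N+1)-2pν+1)/Γ(2pN-2pν+1) · 1/((N+1)(N+1-ν))`, one has
`r(N) = (2pN)^{2p} N^{-2} (1 + 𝒜/N + O(N^{-2}))` as `N → ∞`. -/
theorem optimal_truncation_ratio_asymptotics (p : ℕ) (hp : 2 ≤ p) (ν : ℝ)
    (hν0 : 0 ≤ ν) (hν1 : ν < 1)
    (𝒜 : ℝ) (h𝒜 : 𝒜 = (p : ℝ) - 3/2 - (2 * ((p : ℝ) - 1) + 1) * ν)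
    (r : ℕ → ℝ)
    (hr : ∀ N : ℕ, r N =
      Real.Gamma (2 * p * ((N : ℝ) + 1) - 2 * p * ν + 1) /
        Real.Gamma (2 * p * (N : ℝ) - 2 * p * ν + 1) *
        (1 / (((N : ℝ) + 1) * ((N : ℝ) + 1 - ν)))) :
    (fun N : ℕ => r N - (2 * (p : ℝ) * (N : ℝ)) ^ (2 * p) * ((N : ℝ))⁻¹ ^ 2 * (1 + 𝒜 / (N : ℝ)))
      =O[atTop] (fun N : ℕ => (2 * (p : ℝ) * (N : ℝ)) ^ (2 * p) * ((N : ℝ))⁻¹ ^ 2 * ((N : ℝ))⁻¹ ^ 2) :=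
  optimal_truncation_ratio_asymptotics_general p hp ν 𝒜 h𝒜 r hr
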